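/- Let n ∈ ℕ and let v = (v_1,…,v_n) ∈ ℝ^n be a point with non-negative coordinates. Then for every ε > 0 there exist an integer q with 1 ≤ q ≤ n+1, points v_1,…,v_q ∈ ℚ^n with non-negative coordinates such that every coordinate of each v_j differs from the corresponding coordinate of v by less than ε, and positive real numbers r_1,…,r_q with Σ_{j=1}^q r_j = 1 and Σ_{j=1}^q r_j v_j = v, such that moreover for every index k with v_k ∈ ℚ, the k-th coordinate of every v_j equals v_k. -/
import Mathlib


lemma telescope_Ico (f : ℕ → ℝ) (a b : ℕ) (hab : a ≤ b) :
    ∑ j ∈ Finset.Ico a b, (f j - f (j+1)) = f a - f b := by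
  rw [Finset.sum_Ico_eq_sum_range]
  simp_rw [show ∀ j : ℕ, a + j + 1 = a + (j + 1) from fun j => by omega]
  rw [Finset.sum_range_sub' (fun j => f (a + j))]
  congr 2
  omega


/-- Rational approximation: a point `v ∈ ℝ^n` with non-negative coordinates can,
for every `ε > 0`, be written as a convex combination `v = Σ_{j=1}^q r_j • v_j`
with `1 ≤ q ≤ n+1`, positive reals `r_j` summing to `1`, and points
`v_j ∈ ℚ^n` with non-negative coordinates, each coordinate within `ε` of the
corresponding coordinate of `v`, and agreeing with `v` in every coordinate where
`v` is rational. -/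
theorem rational_convex_approximation (n : ℕ) (v : Fin n → ℝ)
    (hv : ∀ k, 0 ≤ v k) (ε : ℝ) (hε : 0 < ε) :
    ∃ q : ℕ, 1 ≤ q ∧ q ≤ n + 1 ∧
      ∃ (w : Fin q → Fin n → ℝ) (r : Fin q → ℝ),
        (∀ j k, ∃ c : ℚ, w j k = (c : ℝ)) ∧
        (∀ j k, 0 ≤ w j k) ∧
        (∀ j k, |w j k - v k| < ε) ∧
        (∀ j, 0 < r j) ∧
        (∑ j, r j = 1) ∧
        (∀ k, ∑ j, r j * w j k = v k) ∧
        (∀ k, (∃ c : ℚ, v k = (c : ℝ)) → ∀ j, w j k = v k) := by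
  classical
  set S : Finset (Fin n) := Finset.univ.filter (fun k => ¬ ∃ c : ℚ, v k = (c : ℝ)) with hSdef
  have hSmem : ∀ k, k ∈ S ↔ ¬ ∃ c : ℚ, v k = (c : ℝ) := by
    intro k; simp [hSdef]
  have hSpos : ∀ k ∈ S, 0 < v k := by
    intro k hk
    rcases (hv k).lt_or_eq with h | h
    · exact h
    · exact absurd ⟨0, by simp [← h]⟩ ((hSmem k).1 hk)
  set m := S.card with hmdef
  have hmn : m ≤ n := by
    rw [hmdef, hSdef]
    calc (Finset.univ.filter (fun k => ¬ ∃ c : ℚ, v k = (c : ℝ))).card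
        ≤ (Finset.univ : Finset (Fin n)).card := Finset.card_le_card (Finset.filter_subset _ _)
      _ = n := by simp
  set e := S.orderIsoOfFin rfl with hedef
  -- choose δ
  have hne : ∃ c : ℝ, 0 < c ∧ c ≤ ε ∧ ∀ k ∈ S, c ≤ v k := by
    by_cases h : S.Nonempty
    · refine ⟨min ε (S.inf' h v), lt_min hε ?_, min_le_left _ _,
        fun k hk => le_trans (min_le_right _ _) (Finset.inf'_le v hk)⟩
      exact (Finset.lt_inf'_iff h).2 (fun k hk => hSpos k hk)
    · exact ⟨ε, hε, le_refl _, fun k hk => absurd ⟨k, hk⟩ h⟩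
  obtain ⟨c, hc0, hcε, hcS⟩ := hne
  obtain ⟨δ, hδ0, hδc⟩ := exists_rat_btwn hc0
  have hδε : (δ:ℝ) < ε := hδc.trans_le hcε
  have hδv : ∀ k ∈ S, (δ:ℝ) < v k := fun k hk => hδc.trans_le (hcS k hk)
  -- choose the rational lower approximations a i
  have hchoice : ∀ i : Fin m, ∃ a : ℚ,
      v (e i : Fin n) - (δ:ℝ) * (((m:ℝ) - i) / m) < a ∧
      (a:ℝ) < v (e i : Fin n) - (δ:ℝ) * (((m:ℝ) - 1 - i) / m) := by
    intro i
    have hm0 : 0 < (m:ℝ) := by exact_mod_cast i.pos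
    apply exists_rat_btwn
    have : (δ:ℝ) * (((m:ℝ) - 1 - i) / m) < (δ:ℝ) * (((m:ℝ) - i) / m) := by
      apply mul_lt_mul_of_pos_left _ hδ0
      exact (div_lt_div_iff_of_pos_right hm0).2 (by linarith)
    linarith
  choose a ha1 ha2 using hchoice
  -- basic facts about a
  have hmR : ∀ _i : Fin m, (0:ℝ) < m := fun i => by exact_mod_cast i.pos
  have hiR : ∀ i : Fin m, (i:ℝ) + 1 ≤ m := fun i => by exact_mod_cast i.2
  set t : Fin m → ℝ := fun i => (v (e i : Fin n) - (a i : ℝ)) / δ with htdef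
  have ht1 : ∀ i : Fin m, ((m:ℝ) - 1 - i) / m < t i := by
    intro i
    have hm0 := hmR i
    rw [htdef, lt_div_iff₀ hδ0]
    have h2 : ((m:ℝ) - 1 - i) / m * δ = δ * (((m:ℝ) - 1 - i) / m) := by ring
    rw [h2]
    linarith [ha2 i]
  have ht2 : ∀ i : Fin m, t i < ((m:ℝ) - i) / m := by
    intro i
    have hm0 := hmR i
    rw [htdef, div_lt_iff₀ hδ0]
    have h2 : ((m:ℝ) - i) / m * δ = δ * (((m:ℝ) - i) / m) := by ring
    rw [h2]
    linarith [ha1 i]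
  have hkey : ∀ i : Fin m, (δ:ℝ) * (((m:ℝ) - i) / m) ≤ δ := by
    intro i
    have hm0 := hmR i
    have h1 : ((m:ℝ) - i) / m ≤ 1 := by
      rw [div_le_one hm0]
      have : (0:ℝ) ≤ i := by positivity
      linarith
    nlinarith [hδ0.le]
  have hkey2 : ∀ i : Fin m, (0:ℝ) ≤ δ * (((m:ℝ) - 1 - i) / m) := by
    intro i
    have hm0 := hmR i
    exact mul_nonneg hδ0.le (div_nonneg (by linarith [hiR i]) hm0.le)
  have ha_pos : ∀ i : Fin m, 0 < (a i : ℝ) := by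
    intro i
    have := hδv (e i : Fin n) (e i).2
    linarith [ha1 i, hkey i]
  have ha_lt : ∀ i : Fin m, (a i : ℝ) < v (e i : Fin n) := by
    intro i
    linarith [ha2 i, hkey2 i]
  have hva_lt : ∀ i : Fin m, v (e i : Fin n) - (a i : ℝ) < δ := by
    intro i
    linarith [ha1 i, hkey i]
  -- the staircase weights
  set T : ℕ → ℝ := fun j => if h : j < m then t ⟨j, h⟩ else 0 with hTdef
  set u : ℕ → ℝ := fun j => if j = 0 then 1 else T (j - 1) with hudef
  set R : ℕ → ℝ := fun j => u j - u (j + 1) with hRdef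
  have hu0 : u 0 = 1 := by simp [hudef]
  have husucc : ∀ j, u (j + 1) = T j := by intro j; simp [hudef]
  have hTm : ∀ j, m ≤ j → T j = 0 := by
    intro j hj; simp only [hTdef]; rw [dif_neg (by omega)]
  have hu_lt : ∀ j, j ≤ m → u (j + 1) < u j := by
    intro j hj
    rcases Nat.eq_zero_or_pos j with h0 | h0
    · subst h0
      rw [husucc, hu0]
      rcases Nat.eq_zero_or_pos m with hm | hm
      · rw [hTm 0 (by omega)]; norm_num
      · have hlt : (0:ℕ) < m := hm
        rw [hTdef]; simp only []; rw [dif_pos hlt]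
        have := ht2 ⟨0, hlt⟩
        have hm0 : (0:ℝ) < m := hmR ⟨0, hlt⟩
        have : t ⟨0, hlt⟩ < 1 := by
          have h1 : ((m:ℝ) - (⟨0, hlt⟩ : Fin m)) / m = 1 := by
            simp [div_self hm0.ne']
          rw [h1] at this; exact this
        exact this
    · have hj1 : j - 1 < m := by omega
      have hujq : u j = T (j - 1) := by
        rw [hudef]; simp only []; rw [if_neg (by omega)]
      rw [husucc, hujq]
      rcases Nat.lt_or_ge j m with hjm | hjm
      · rw [hTdef]; simp only []; rw [dif_pos hjm, dif_pos hj1]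
        have h2 := ht2 ⟨j, hjm⟩
        have h1 := ht1 ⟨j - 1, hj1⟩
        have hcast : ((⟨j - 1, hj1⟩ : Fin m) : ℝ) = (j : ℝ) - 1 := by
          simp only [Fin.val_mk]
          push_cast [Nat.cast_sub h0]
          ring
        rw [hcast] at h1
        have : (m:ℝ) - 1 - ((j:ℝ) - 1) = (m:ℝ) - (⟨j, hjm⟩ : Fin m) := by
          simp only [Fin.val_mk]; ring
        rw [this] at h1
        linarith
      · have hjm' : j = m := by omega
        rw [hTm j (by omega)]
        rw [hTdef]; simp only []; rw [dif_pos hj1]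
        have h1 := ht1 ⟨j - 1, hj1⟩
        have hm0 : (0:ℝ) < m := hmR ⟨j - 1, hj1⟩
        have hcast : ((⟨j - 1, hj1⟩ : Fin m) : ℝ) = (m : ℝ) - 1 := by
          simp only [Fin.val_mk]
          subst hjm'
          push_cast [Nat.cast_sub h0]
          ring
        rw [hcast] at h1
        have hz : ((m:ℝ) - 1 - ((m:ℝ) - 1)) / m = 0 := by
          rw [show (m:ℝ) - 1 - ((m:ℝ) - 1) = 0 by ring, zero_div]
        rw [hz] at h1
        exact h1
  have hRpos : ∀ j, j ≤ m → 0 < R j := by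
    intro j hj
    rw [hRdef]
    exact sub_pos.2 (hu_lt j hj)
  have hsumR : ∑ j ∈ Finset.range (m + 1), R j = 1 := by
    have h := Finset.sum_range_sub' u (m + 1)
    calc ∑ j ∈ Finset.range (m + 1), R j
        = ∑ j ∈ Finset.range (m + 1), (u j - u (j + 1)) := rfl
      _ = u 0 - u (m + 1) := h
      _ = 1 := by rw [hu0, husucc, hTm m le_rfl]; ring
  -- the points
  set W : ℕ → Fin n → ℝ := fun j k =>
    if hk : k ∈ S then
      (a (e.symm ⟨k, hk⟩) : ℝ) + (δ:ℝ) * (if ((e.symm ⟨k, hk⟩ : Fin m) : ℕ) < j then 1 else 0)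
    else v k with hWdef
  have hW_out : ∀ (j : ℕ) k, k ∉ S → W j k = v k := by
    intro j k hk; rw [hWdef]; exact dif_neg hk
  have hW_in : ∀ (j : ℕ) (k) (hk : k ∈ S), W j k =
      (a (e.symm ⟨k, hk⟩) : ℝ) + (δ:ℝ) * (if ((e.symm ⟨k, hk⟩ : Fin m) : ℕ) < j then 1 else 0) := by
    intro j k hk; rw [hWdef]; exact dif_pos hk
  have hvek : ∀ (k) (hk : k ∈ S), v ((e (e.symm ⟨k, hk⟩)) : Fin n) = v k := by
    intro k hk
    congr 1
    rw [OrderIso.apply_symm_apply]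
  refine ⟨m + 1, by omega, by omega, fun j => W j, fun j => R j, ?_, ?_, ?_, ?_, ?_, ?_, ?_⟩
  · -- rationality
    intro j k
    show ∃ c : ℚ, W (j:ℕ) k = (c:ℝ)
    by_cases hk : k ∈ S
    · rw [hW_in j k hk]
      by_cases hij : ((e.symm ⟨k, hk⟩ : Fin m) : ℕ) < (j : ℕ)
      · exact ⟨a (e.symm ⟨k, hk⟩) + δ, by rw [if_pos hij]; push_cast; ring⟩
      · exact ⟨a (e.symm ⟨k, hk⟩), by rw [if_neg hij]; push_cast; ring⟩
    · rw [hW_out j k hk]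
      by_contra hc
      exact hk ((hSmem k).2 hc)
  · -- nonnegativity
    intro j k
    show (0:ℝ) ≤ W (j:ℕ) k
    by_cases hk : k ∈ S
    · rw [hW_in j k hk]
      have h1 := ha_pos (e.symm ⟨k, hk⟩)
      have h2 : (0:ℝ) ≤ (δ:ℝ) * (if ((e.symm ⟨k, hk⟩ : Fin m) : ℕ) < (j:ℕ) then 1 else 0) := by
        apply mul_nonneg hδ0.le
        split <;> norm_num
      linarith
    · rw [hW_out j k hk]; exact hv k
  · -- closeness
    intro j k
    show |W (j:ℕ) k - v k| < ε
    by_cases hk : k ∈ S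
    · rw [hW_in j k hk]
      set i := e.symm ⟨k, hk⟩ with hidef
      have hvk := hvek k hk
      rw [← hidef] at hvk
      have h1 := ha_lt i
      have h2 := hva_lt i
      rw [hvk] at h1 h2
      have hb : (0:ℝ) ≤ (if ((i : Fin m) : ℕ) < (j:ℕ) then (1:ℝ) else 0) ∧
          (if ((i : Fin m) : ℕ) < (j:ℕ) then (1:ℝ) else 0) ≤ 1 := by
        constructor <;> (split <;> norm_num)
      rw [abs_lt]
      constructor
      · nlinarith [hb.1, hδ0.le]
      · nlinarith [hb.2, hδ0.le]
    · rw [hW_out j k hk]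
      simpa using hε
  · -- positivity of weights
    intro j
    show (0:ℝ) < R (j:ℕ)
    exact hRpos j (by omega)
  · -- sum of weights
    show ∑ j : Fin (m+1), R (j:ℕ) = 1
    rw [Fin.sum_univ_eq_sum_range R (m + 1)]
    exact hsumR
  · -- convex combination
    intro k
    show ∑ j : Fin (m+1), R (j:ℕ) * W (j:ℕ) k = v k
    rw [Fin.sum_univ_eq_sum_range (fun j => R j * W j k) (m + 1)]
    by_cases hk : k ∈ S
    · set i := e.symm ⟨k, hk⟩ with hidef
      set iN := ((i : Fin m) : ℕ) with hiNdef
      have hiNm : iN < m := i.2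
      have hvk := hvek k hk
      rw [← hidef] at hvk
      have hfilter : (Finset.range (m + 1)).filter (fun j => iN < j) =
          Finset.Ico (iN + 1) (m + 1) := by
        ext j
        simp only [Finset.mem_filter, Finset.mem_range, Finset.mem_Ico]
        omega
      calc ∑ j ∈ Finset.range (m + 1), R j * W j k
          = ∑ j ∈ Finset.range (m + 1),
              (R j * (a i : ℝ) + (if iN < j then (δ:ℝ) * R j else 0)) := by
            apply Finset.sum_congr rfl
            intro j _
            rw [hW_in j k hk, ← hidef, ← hiNdef]
            split <;> ring
        _ = (∑ j ∈ Finset.range (m + 1), R j) * (a i : ℝ) +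
            ∑ j ∈ (Finset.range (m + 1)).filter (fun j => iN < j), (δ:ℝ) * R j := by
            rw [Finset.sum_add_distrib, ← Finset.sum_mul, Finset.sum_filter]
        _ = (a i : ℝ) + (δ:ℝ) * ∑ j ∈ Finset.Ico (iN + 1) (m + 1), R j := by
            rw [hsumR, hfilter, Finset.mul_sum]; ring
        _ = (a i : ℝ) + (δ:ℝ) * (u (iN + 1) - u (m + 1)) := by
            rw [show (∑ j ∈ Finset.Ico (iN + 1) (m + 1), R j)
                = ∑ j ∈ Finset.Ico (iN + 1) (m + 1), (u j - u (j + 1)) from rfl,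
              telescope_Ico u (iN + 1) (m + 1) (by omega)]
        _ = v k := by
            rw [husucc, husucc, hTm m le_rfl, hTdef]
            simp only []
            rw [dif_pos hiNm]
            have hieq : (⟨iN, hiNm⟩ : Fin m) = i := by
              apply Fin.ext; simp [hiNdef]
            rw [hieq, htdef]
            simp only []
            rw [mul_comm ((δ:ℝ)) _, sub_zero]
            rw [div_mul_cancel₀ _ (ne_of_gt hδ0)]
            rw [← hvk]; ring
    · have : ∀ j ∈ Finset.range (m + 1), R j * W j k = R j * v k := by
        intro j _; rw [hW_out j k hk]
      rw [Finset.sum_congr rfl this, ← Finset.sum_mul, hsumR, one_mul]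
  · -- rational coordinates fixed
    intro k hk j
    show W (j:ℕ) k = v k
    apply hW_out
    rw [hSmem k]
    exact fun h => h hk
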